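/- Under the same setting, if additionally V is ℤ^N-periodic (V(x+k,y+k)=V(x,y)) and λ₁ is the principal periodic eigenvalue of Lφ(x) = ∫_{ℝ^N} V(x,y)φ(y)dy on continuous 1-periodic functions (with positive periodic eigenfunction φ_p), then λ_R < λ₁ for every R > 0. -/

import Mathlib

/-!
Suppose `lam1 ≤ lamR`. Scale `φp` to the smallest multiple `M • φp` lying above `φR` on the ball `B`,
and take a touching point `x` of maximal norm. Integrating both eigen-equations at `x` gives
`lamR φR x ≤ M ∫_B V x · φp ≤ M ∫ V x · φp = lam1 φR x ≤ lamR φR x`, so both inequalities are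
equalities. As `V x y > 0` for `dist x y ≤ r`, the second equality keeps the `r`-neighbourhood of `x`
inside `B`, and the first makes every point of it in the open ball a touching point, including
points of larger norm than `x`.
-/

open MeasureTheory Metric Filter Topology Set

section Geometry

variable {E : Type*} [NormedAddCommGroup E] [NormedSpace ℝ E] [Nontrivial E]

theorem exists_norm_eq_one_sameRay (x : E) : ∃ u : E, ‖u‖ = 1 ∧ SameRay ℝ x u := by
  rcases eq_or_ne x 0 with rfl | hx
  · obtain ⟨u, hu⟩ := exists_norm_eq E zero_le_one
    exact ⟨u, hu, SameRay.zero_left u⟩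
  · refine ⟨‖x‖⁻¹ • x, ?_, SameRay.sameRay_nonneg_smul_right x (by positivity)⟩
    rw [norm_smul, norm_inv, norm_norm, inv_mul_cancel₀ (norm_ne_zero_iff.mpr hx)]

theorem exists_dist_le_norm_mem_Ioo (x : E) {r b : ℝ} (hr : 0 < r) (hb : ‖x‖ < b) :
    ∃ y : E, dist x y ≤ r ∧ ‖x‖ < ‖y‖ ∧ ‖y‖ < b := by
  obtain ⟨u, hu, hxu⟩ := exists_norm_eq_one_sameRay x
  set t := min r ((b - ‖x‖) / 2)
  have ht : 0 < t := lt_min hr (by linarith)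
  have hnorm : ‖x + t • u‖ = ‖x‖ + t := by
    rw [(hxu.nonneg_smul_right ht.le).norm_add, norm_smul, hu, mul_one, Real.norm_of_nonneg ht.le]
  refine ⟨x + t • u, ?_, ?_, ?_⟩
  · rw [dist_self_add_right, norm_smul, hu, mul_one, Real.norm_of_nonneg ht.le]
    exact min_le_left _ _
  · linarith
  · linarith [min_le_right r ((b - ‖x‖) / 2)]

end Geometry

theorem setIntegral_pos_of_continuousAt {X : Type*} [TopologicalSpace X] [MeasurableSpace X]
    [OpensMeasurableSpace X] {μ : Measure X} [μ.IsOpenPosMeasure] {f : X → ℝ} {s : Set X} {y : X}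
    (hs : MeasurableSet s) (hf : IntegrableOn f s μ) (hnn : ∀ x ∈ s, 0 ≤ f x) (hsy : s ∈ 𝓝 y)
    (hfy : ContinuousAt f y) (hpos : 0 < f y) : 0 < ∫ x in s, f x ∂μ := by
  rw [setIntegral_pos_iff_support_of_nonneg_ae (ae_restrict_of_forall_mem hs hnn) hf]
  obtain ⟨U, hUsub, hUo, hyU⟩ :=
    mem_nhds_iff.mp (inter_mem hsy (hfy.eventually (lt_mem_nhds hpos)))
  calc 0 < μ U := hUo.measure_pos μ ⟨y, hyU⟩
    _ ≤ μ (Function.support f ∩ s) := measure_mono fun x hx => ⟨(hUsub hx).2.ne', (hUsub hx).1⟩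

theorem IsCompact.exists_touching_multiple {X : Type*} [TopologicalSpace X] {K : Set X}
    (hK : IsCompact K) (hne : K.Nonempty) {f g : X → ℝ} (hf : ContinuousOn f K)
    (hg : ContinuousOn g K) (hfpos : ∀ x ∈ K, 0 < f x) (hgpos : ∀ x ∈ K, 0 < g x) :
    ∃ M, 0 < M ∧ (∀ x ∈ K, f x ≤ M * g x) ∧ ∃ x ∈ K, f x = M * g x := by
  obtain ⟨x₀, hx₀, hmax⟩ :=
    hK.exists_isMaxOn hne (hf.div hg fun x hx => (hgpos x hx).ne')
  refine ⟨f x₀ / g x₀, div_pos (hfpos x₀ hx₀) (hgpos x₀ hx₀), fun x hx => ?_,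
    x₀, hx₀, (div_mul_cancel₀ _ (hgpos x₀ hx₀).ne').symm⟩
  rw [← div_le_iff₀ (hgpos x hx)]
  exact hmax hx

section Eigenvalue

variable {E : Type*} [NormedAddCommGroup E] [MeasurableSpace E] [BorelSpace E]
  [ProperSpace E] {μ : Measure E} [IsFiniteMeasureOnCompacts μ]
  {V : E → E → ℝ} {φR φp : E → ℝ} {R lamR lam1 M : ℝ} {x : E}

theorem integral_gap_eq_zero_of_touching (hVc : Continuous (V x)) (hVnn : ∀ y, 0 ≤ V x y)
    (hφRc : ContinuousOn φR (closedBall 0 R)) (hφpnn : ∀ y, 0 ≤ φp y)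
    (hint : Integrable (fun y => V x y * φp y) μ) (hM : 0 ≤ M)
    (hle : ∀ y ∈ closedBall 0 R, φR y ≤ M * φp y) (htouch : φR x = M * φp x)
    (heigR : ∫ y in closedBall 0 R, V x y * φR y ∂μ = lamR * φR x)
    (heig : ∫ y, V x y * φp y ∂μ = lam1 * φp x) (hlam : lam1 ≤ lamR) :
    ∫ y in closedBall 0 R, (M * (V x y * φp y) - V x y * φR y) ∂μ = 0 ∧
      M * ∫ y in (closedBall 0 R)ᶜ, V x y * φp y ∂μ = 0 := by
  have hKm : MeasurableSet (closedBall (0 : E) R) := measurableSet_closedBall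
  have hIR : IntegrableOn (fun y => V x y * φR y) (closedBall 0 R) μ :=
    (hVc.continuousOn.mul hφRc).integrableOn_compact (isCompact_closedBall 0 R)
  have hgap_nonneg : 0 ≤ ∫ y in closedBall 0 R, (M * (V x y * φp y) - V x y * φR y) ∂μ :=
    setIntegral_nonneg hKm fun y hy => by
      nlinarith [mul_le_mul_of_nonneg_left (hle y hy) (hVnn y)]
  have hout_nonneg : 0 ≤ M * ∫ y in (closedBall 0 R)ᶜ, V x y * φp y ∂μ :=
    mul_nonneg hM (setIntegral_nonneg hKm.compl fun y _ => mul_nonneg (hVnn y) (hφpnn y))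
  have hsum : (∫ y in closedBall 0 R, (M * (V x y * φp y) - V x y * φR y) ∂μ) +
      M * ∫ y in (closedBall 0 R)ᶜ, V x y * φp y ∂μ = (lam1 - lamR) * φR x := by
    have hsplit := integral_add_compl hKm hint
    rw [heig] at hsplit
    rw [integral_sub (hint.const_mul M).integrableOn hIR, integral_const_mul, heigR]
    linear_combination M * hsplit - lam1 * htouch
  have hφRx : 0 ≤ φR x := htouch ▸ mul_nonneg hM (hφpnn x)
  have hneg : (lam1 - lamR) * φR x ≤ 0 := mul_nonpos_of_nonpos_of_nonneg (by linarith) hφRx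
  exact ⟨by linarith, by linarith⟩

theorem norm_le_and_touching_of_dist_le [μ.IsOpenPosMeasure] {r : ℝ} (hVc : Continuous (V x))
    (hVnn : ∀ y, 0 ≤ V x y) (hVpos : ∀ y, dist x y ≤ r → 0 < V x y)
    (hφRc : ContinuousOn φR (closedBall 0 R)) (hφpc : Continuous φp) (hφppos : ∀ y, 0 < φp y)
    (hint : Integrable (fun y => V x y * φp y) μ) (hM : 0 < M)
    (hle : ∀ y ∈ closedBall 0 R, φR y ≤ M * φp y) (htouch : φR x = M * φp x)
    (heigR : ∫ y in closedBall 0 R, V x y * φR y ∂μ = lamR * φR x)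
    (heig : ∫ y, V x y * φp y ∂μ = lam1 * φp x) (hlam : lam1 ≤ lamR) {y : E}
    (hy : dist x y ≤ r) : ‖y‖ ≤ R ∧ (‖y‖ < R → φR y = M * φp y) := by
  obtain ⟨hgap, hout⟩ := integral_gap_eq_zero_of_touching hVc hVnn hφRc (fun y => (hφppos y).le)
    hint hM.le hle htouch heigR heig hlam
  have hKm : MeasurableSet (closedBall (0 : E) R) := measurableSet_closedBall
  constructor
  · by_contra! hyR
    have hpos : 0 < ∫ z in (closedBall 0 R)ᶜ, V x z * φp z ∂μ :=
      setIntegral_pos_of_continuousAt hKm.compl hint.integrableOn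
        (fun z _ => mul_nonneg (hVnn z) (hφppos z).le)
        (isClosed_closedBall.isOpen_compl.mem_nhds (by simpa using hyR))
        (hVc.mul hφpc).continuousAt (mul_pos (hVpos y hy) (hφppos y))
    exact (mul_pos hM hpos).ne' hout
  · intro hyR
    refine le_antisymm (hle y (mem_closedBall_zero_iff.2 hyR.le)) (not_lt.1 fun hlt => ?_)
    have hK : closedBall (0 : E) R ∈ 𝓝 y := closedBall_mem_nhds_of_mem (mem_ball_zero_iff.2 hyR)
    have hpos : 0 < ∫ z in closedBall 0 R, (M * (V x z * φp z) - V x z * φR z) ∂μ :=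
      setIntegral_pos_of_continuousAt hKm
        ((hint.const_mul M).integrableOn.sub
          ((hVc.continuousOn.mul hφRc).integrableOn_compact (isCompact_closedBall 0 R)))
        (fun z hz => by nlinarith [mul_le_mul_of_nonneg_left (hle z hz) (hVnn z)]) hK
        ((continuousAt_const.mul (hVc.mul hφpc).continuousAt).sub
          (hVc.continuousAt.mul (hφRc.continuousAt hK)))
        (by nlinarith [mul_lt_mul_of_pos_left hlt (hVpos y hy)])
    exact hpos.ne' hgap

theorem eigenvalue_closedBall_lt_eigenvalue [NormedSpace ℝ E] [Nontrivial E] [μ.IsOpenPosMeasure]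
    {r : ℝ} (hr : 0 < r) (hVc : ∀ x, Continuous (V x)) (hVnn : ∀ x y, 0 ≤ V x y)
    (hVpos : ∀ x y, dist x y ≤ r → 0 < V x y) (hR : 0 ≤ R)
    (hφRc : ContinuousOn φR (closedBall 0 R)) (hφRpos : ∀ x ∈ closedBall (0 : E) R, 0 < φR x)
    (heigR : ∀ x ∈ closedBall (0 : E) R,
      ∫ y in closedBall 0 R, V x y * φR y ∂μ = lamR * φR x)
    (hφpc : Continuous φp) (hφppos : ∀ x, 0 < φp x)
    (hφpint : ∀ x, Integrable (fun y => V x y * φp y) μ)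
    (heig : ∀ x, ∫ y, V x y * φp y ∂μ = lam1 * φp x) :
    lamR < lam1 := by
  by_contra! hlam
  obtain ⟨M, hM, hle, x₀, hx₀, htouch₀⟩ := (isCompact_closedBall (0 : E) R).exists_touching_multiple
    ⟨0, mem_closedBall_self hR⟩ hφRc hφpc.continuousOn hφRpos fun x _ => hφppos x
  set S := closedBall (0 : E) R ∩ (fun x => φR x - M * φp x) ⁻¹' {0}
  have hS : IsCompact S := (isCompact_closedBall 0 R).of_isClosed_subset
    ((hφRc.sub (continuousOn_const.mul hφpc.continuousOn)).preimage_isClosed_of_isClosed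
      isClosed_closedBall isClosed_singleton) inter_subset_left
  obtain ⟨x₁, ⟨hx₁, htouch₁⟩, hmax⟩ :=
    hS.exists_isMaxOn ⟨x₀, hx₀, by simp [htouch₀]⟩ continuous_norm.continuousOn
  have hspread {y : E} (hy : dist x₁ y ≤ r) : ‖y‖ ≤ R ∧ (‖y‖ < R → φR y = M * φp y) :=
    norm_le_and_touching_of_dist_le (hVc x₁) (hVnn x₁) (hVpos x₁) hφRc hφpc hφppos (hφpint x₁) hM
      hle (sub_eq_zero.1 htouch₁) (heigR x₁ hx₁) (heig x₁) hlam hy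
  obtain ⟨y₁, hy₁, hx₁y₁, -⟩ := exists_dist_le_norm_mem_Ioo x₁ hr (lt_add_one ‖x₁‖)
  obtain ⟨y₂, hy₂, hx₁y₂, hy₂R⟩ :=
    exists_dist_le_norm_mem_Ioo x₁ hr (hx₁y₁.trans_le (hspread hy₁).1)
  have hy₂S : y₂ ∈ S :=
    ⟨mem_closedBall_zero_iff.2 hy₂R.le, by simp [(hspread hy₂).2 hy₂R]⟩
  exact (hmax hy₂S).not_gt hx₁y₂

end Eigenvalue

theorem stmt7_general (N : ℕ) (hN : 1 ≤ N) (r : ℝ) (hr : 0 < r)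
    (V : EuclideanSpace ℝ (Fin N) → EuclideanSpace ℝ (Fin N) → ℝ)
    (hVc : Continuous (Function.uncurry V)) (hVnn : ∀ x y, 0 ≤ V x y)
    (hVpos : ∀ x y, dist x y ≤ r → 0 < V x y)
    (R : ℝ) (hR : 0 < R) (lamR lam1 : ℝ)
    (φR : EuclideanSpace ℝ (Fin N) → ℝ)
    (hφRc : ContinuousOn φR (Metric.closedBall 0 R))
    (hφRpos : ∀ x ∈ Metric.closedBall (0 : EuclideanSpace ℝ (Fin N)) R, 0 < φR x)
    (heigR : ∀ x ∈ Metric.closedBall (0 : EuclideanSpace ℝ (Fin N)) R,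
      (∫ y in Metric.closedBall (0 : EuclideanSpace ℝ (Fin N)) R, V x y * φR y) = lamR * φR x)
    (φp : EuclideanSpace ℝ (Fin N) → ℝ)
    (hφpc : Continuous φp) (hφppos : ∀ x, 0 < φp x)
    (hφpint : ∀ x, Integrable fun y => V x y * φp y)
    (heig : ∀ x, (∫ y, V x y * φp y) = lam1 * φp x) :
    lamR < lam1 := by
  have : Nonempty (Fin N) := ⟨⟨0, hN⟩⟩
  exact eigenvalue_closedBall_lt_eigenvalue hr (fun x => hVc.comp (Continuous.prodMk_right x))
    hVnn hVpos hR.le hφRc hφRpos heigR hφpc hφppos hφpint heig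

/-- If moreover `V` is `ℤ^N`-periodic and `λ₁` is the principal periodic eigenvalue of
`Lφ(x) = ∫_{ℝ^N} V(x,y) φ(y) dy` (with positive periodic eigenfunction `φ_p`), then the
principal eigenvalue `λ_R` of the truncation to the ball `B_R` satisfies `λ_R < λ₁`. -/
theorem stmt7 (N : ℕ) (hN : 1 ≤ N) (r : ℝ) (hr : 0 < r)
    (V : EuclideanSpace ℝ (Fin N) → EuclideanSpace ℝ (Fin N) → ℝ)
    (hVc : Continuous (Function.uncurry V)) (hVnn : ∀ x y, 0 ≤ V x y)
    (hVpos : ∀ x y, dist x y ≤ r → 0 < V x y)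
    (hVper : ∀ (k : Fin N → ℤ) (x y : EuclideanSpace ℝ (Fin N)),
      V (x + (WithLp.equiv 2 (Fin N → ℝ)).symm (fun i => (k i : ℝ)))
        (y + (WithLp.equiv 2 (Fin N → ℝ)).symm (fun i => (k i : ℝ))) = V x y)
    (hVint : ∀ x, Integrable (V x))
    (hIcont : Continuous fun x => ∫ y, V x y)
    (R : ℝ) (hR : 0 < R) (lamR lam1 : ℝ)
    (φR : EuclideanSpace ℝ (Fin N) → ℝ)
    (hφRc : ContinuousOn φR (Metric.closedBall 0 R))
    (hφRpos : ∀ x ∈ Metric.closedBall (0 : EuclideanSpace ℝ (Fin N)) R, 0 < φR x)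
    (heigR : ∀ x ∈ Metric.closedBall (0 : EuclideanSpace ℝ (Fin N)) R,
      (∫ y in Metric.closedBall (0 : EuclideanSpace ℝ (Fin N)) R, V x y * φR y) = lamR * φR x)
    (φp : EuclideanSpace ℝ (Fin N) → ℝ)
    (hφpc : Continuous φp) (hφppos : ∀ x, 0 < φp x)
    (hφpper : ∀ (k : Fin N → ℤ) (x : EuclideanSpace ℝ (Fin N)),
      φp (x + (WithLp.equiv 2 (Fin N → ℝ)).symm (fun i => (k i : ℝ))) = φp x)
    (hφpint : ∀ x, Integrable fun y => V x y * φp y)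
    (heig : ∀ x, (∫ y, V x y * φp y) = lam1 * φp x) :
    lamR < lam1 :=
  stmt7_general N hN r hr V hVc hVnn hVpos R hR lamR lam1 φR hφRc hφRpos heigR φp hφpc hφppos hφpint
    heig
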